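/- Let T' be a finite tree containing three distinct vertices a, b, v forming a path a–b–v, where a has degree 1 in T' and b has degree 2 in T', and let T be the tree obtained from T' by adding three new vertices u₁, u₂, u₃ with edges u₁u₂, u₂u₃, and vu₁. Then γ₂(T) = γ₂(T') + 2 and α₂(T) = α₂(T') + 2; in particular α₂(T) − γ₂(T) = α₂(T') − γ₂(T'). -/

import Mathlib

/-!
Write `T` as `T' ⊕ P₃` plus the edge `v u₁`, where `uᵢ` is `inr (i - 1)`. Gluing a minimum
2-dominating set of `T'` to the 2-dominating set `{u₁, u₃}` of `P₃` gives `γ₂(T) ≤ γ₂(T') + 2`;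
gluing a maximum 2-independent set of `T'` to the 2-independent set `{u₂, u₃}`, which avoids `u₁`,
gives `α₂(T) ≥ α₂(T') + 2`. Conversely a 2-independent set of `T` restricts to both pieces, and
`P₃` has none of size 3.

For `γ₂(T) ≥ γ₂(T') + 2`, a minimum 2-dominating set `S` of `T` contains the leaf `u₃` and one of
`u₁, u₂`, and its trace on `T'`, with `v` added when `u₁ ∈ S`, is 2-dominating in `T'`. This is one
vertex too many only when `u₁ ∈ S`, `u₂ ∉ S` and `v ∉ S`; then `b ∈ S`, and once `v` is added the
leaf `a` and `v` dominate `b`, so `b` can be dropped.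
-/

open SimpleGraph

/-- `S` is a `k`-dominating set of the subgraph of `G` induced by `U`:
`S ⊆ U` and every vertex of `U` not in `S` has at least `k` neighbors in `S`. -/
def IsKDomOn {V : Type*} (G : SimpleGraph V) (k : ℕ) (U S : Set V) : Prop :=
  S ⊆ U ∧ ∀ v ∈ U, v ∉ S → k ≤ (G.neighborSet v ∩ S).ncard

/-- `S` is a `k`-independent set of the subgraph of `G` induced by `U`:
`S ⊆ U` and every vertex of `S` has at most `k - 1` neighbors in `S`. -/
def IsKIndOn {V : Type*} (G : SimpleGraph V) (k : ℕ) (U S : Set V) : Prop :=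
  S ⊆ U ∧ ∀ v ∈ S, (G.neighborSet v ∩ S).ncard ≤ k - 1

/-- The `k`-domination number of the subgraph of `G` induced by `U`. -/
noncomputable def gammaK {V : Type*} (G : SimpleGraph V) (k : ℕ) (U : Set V) : ℕ :=
  sInf {n | ∃ S, IsKDomOn G k U S ∧ S.ncard = n}

/-- The `k`-independence number of the subgraph of `G` induced by `U`. -/
noncomputable def alphaK {V : Type*} (G : SimpleGraph V) (k : ℕ) (U : Set V) : ℕ :=
  sSup {n | ∃ S, IsKIndOn G k U S ∧ S.ncard = n}

open Set Sum

theorem Set.ncard_image_inl_union_image_inr {α β : Type*} [Finite α] [Finite β]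
    (D : Set α) (E : Set β) : (inl '' D ∪ inr '' E : Set (α ⊕ β)).ncard = D.ncard + E.ncard := by
  rw [ncard_union_eq disjoint_image_inl_image_inr, ncard_image_of_injective _ inl_injective,
    ncard_image_of_injective _ inr_injective]

theorem Set.ncard_eq_ncard_preimage_inl_add_ncard_preimage_inr {α β : Type*} [Finite α]
    [Finite β] (S : Set (α ⊕ β)) : S.ncard = (inl ⁻¹' S).ncard + (inr ⁻¹' S).ncard := by
  conv_lhs => rw [← image_preimage_inl_union_image_preimage_inr S]
  exact ncard_image_inl_union_image_inr _ _

section KDomination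

variable {V : Type*} {G : SimpleGraph V} {k : ℕ} {S : Set V}

theorem gammaK_le_ncard (h : IsKDomOn G k univ S) : gammaK G k univ ≤ S.ncard :=
  Nat.sInf_le ⟨S, h, rfl⟩

theorem exists_isKDomOn_ncard_eq_gammaK (G : SimpleGraph V) (k : ℕ) :
    ∃ S, IsKDomOn G k univ S ∧ S.ncard = gammaK G k univ :=
  Nat.sInf_mem (s := {n | ∃ S, IsKDomOn G k univ S ∧ S.ncard = n})
    ⟨_, univ, ⟨subset_rfl, fun _ _ hx => absurd (mem_univ _) hx⟩, rfl⟩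

theorem bddAbove_ncard_isKIndOn [Finite V] (G : SimpleGraph V) (k : ℕ) :
    BddAbove {n | ∃ S, IsKIndOn G k univ S ∧ S.ncard = n} := by
  refine ⟨Nat.card V, ?_⟩
  rintro _ ⟨S, -, rfl⟩
  exact (ncard_le_ncard (subset_univ S)).trans_eq (ncard_univ V)

theorem ncard_le_alphaK [Finite V] (h : IsKIndOn G k univ S) : S.ncard ≤ alphaK G k univ :=
  le_csSup (bddAbove_ncard_isKIndOn G k) ⟨S, h, rfl⟩

theorem exists_isKIndOn_ncard_eq_alphaK [Finite V] (G : SimpleGraph V) (k : ℕ) :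
    ∃ S, IsKIndOn G k univ S ∧ S.ncard = alphaK G k univ :=
  Nat.sSup_mem (s := {n | ∃ S, IsKIndOn G k univ S ∧ S.ncard = n})
    ⟨0, ∅, ⟨empty_subset _, fun _ h => absurd h (notMem_empty _)⟩, ncard_empty _⟩
    (bddAbove_ncard_isKIndOn G k)

theorem IsKDomOn.mem_of_ncard_neighborSet_lt [Finite V] (hS : IsKDomOn G k univ S) {x : V}
    (hx : (G.neighborSet x).ncard < k) : x ∈ S := by
  by_contra hxS
  have := hS.2 x (mem_univ x) hxS
  have := ncard_le_ncard (inter_subset_left (s := G.neighborSet x) (t := S))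
  omega

theorem IsKDomOn.neighborSet_subset [Finite V] (hS : IsKDomOn G k univ S) {x : V} (hxS : x ∉ S)
    (hx : (G.neighborSet x).ncard ≤ k) : G.neighborSet x ⊆ S := by
  have h := eq_of_subset_of_ncard_le inter_subset_left (hx.trans (hS.2 x (mem_univ x) hxS))
  exact inter_eq_left.1 h

theorem IsKDomOn.diff_singleton (hS : IsKDomOn G k univ S) {b : V}
    (hN : G.neighborSet b ⊆ S) (hk : k ≤ (G.neighborSet b).ncard) :
    IsKDomOn G k univ (S \ {b}) := by
  refine ⟨subset_univ _, fun x _ hx => ?_⟩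
  by_cases hxb : x = b
  · subst hxb
    convert hk using 2
    exact inter_eq_left.2 fun y hy => ⟨hN hy, (G.ne_of_adj hy).symm⟩
  · have hxS : x ∉ S := fun h => hx ⟨h, hxb⟩
    convert hS.2 x (mem_univ x) hxS using 2
    refine subset_antisymm (inter_subset_inter_right _ sdiff_subset)
      fun y ⟨hy, hyS⟩ => ⟨hy, hyS, ?_⟩
    rintro rfl
    exact hxS (hN hy.symm)

end KDomination

section SumSupEdge

variable {V W : Type*} {G : SimpleGraph V} {H : SimpleGraph W} {v : V} {w : W}

theorem image_inl_neighborSet_inter_subset (x : V) (S : Set (V ⊕ W)) :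
    inl '' (G.neighborSet x ∩ inl ⁻¹' S) ⊆
      (G.sum H ⊔ edge (inl v) (inr w)).neighborSet (inl x) ∩ S := by
  rintro _ ⟨y, ⟨hy, hyS⟩, rfl⟩
  exact ⟨Or.inl (by simpa using hy), hyS⟩

theorem image_inr_neighborSet_inter_subset (y : W) (S : Set (V ⊕ W)) :
    inr '' (H.neighborSet y ∩ inr ⁻¹' S) ⊆
      (G.sum H ⊔ edge (inl v) (inr w)).neighborSet (inr y) ∩ S := by
  rintro _ ⟨z, ⟨hz, hzS⟩, rfl⟩
  exact ⟨Or.inl (by simpa using hz), hzS⟩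

theorem neighborSet_inl_inter_eq_image {x : V} {S : Set (V ⊕ W)} (h : x ≠ v ∨ inr w ∉ S) :
    (G.sum H ⊔ edge (inl v) (inr w)).neighborSet (inl x) ∩ S =
      inl '' (G.neighborSet x ∩ inl ⁻¹' S) := by
  refine subset_antisymm ?_ (image_inl_neighborSet_inter_subset x S)
  rintro (y | y) ⟨hy, hyS⟩
  · exact ⟨y, ⟨by simpa [edge_adj] using hy, hyS⟩, rfl⟩
  · obtain ⟨rfl, rfl⟩ : x = v ∧ y = w := by simpa [edge_adj] using hy
    simp_all

theorem neighborSet_inr_inter_eq_image {y : W} {S : Set (V ⊕ W)} (h : y ≠ w ∨ inl v ∉ S) :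
    (G.sum H ⊔ edge (inl v) (inr w)).neighborSet (inr y) ∩ S =
      inr '' (H.neighborSet y ∩ inr ⁻¹' S) := by
  refine subset_antisymm ?_ (image_inr_neighborSet_inter_subset y S)
  rintro (x | x) ⟨hx, hxS⟩
  · obtain ⟨rfl, rfl⟩ : y = w ∧ x = v := by simpa [edge_adj] using hx
    simp_all
  · exact ⟨x, ⟨by simpa [edge_adj] using hx, hxS⟩, rfl⟩

theorem ncard_neighborSet_inter_preimage_inl_le [Finite V] [Finite W] (x : V)
    (S : Set (V ⊕ W)) : (G.neighborSet x ∩ inl ⁻¹' S).ncard ≤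
      ((G.sum H ⊔ edge (inl v) (inr w)).neighborSet (inl x) ∩ S).ncard := by
  rw [← ncard_image_of_injective _ inl_injective]
  exact ncard_le_ncard (image_inl_neighborSet_inter_subset x S)

theorem ncard_neighborSet_inter_preimage_inr_le [Finite V] [Finite W] (y : W)
    (S : Set (V ⊕ W)) : (H.neighborSet y ∩ inr ⁻¹' S).ncard ≤
      ((G.sum H ⊔ edge (inl v) (inr w)).neighborSet (inr y) ∩ S).ncard := by
  rw [← ncard_image_of_injective _ inr_injective]
  exact ncard_le_ncard (image_inr_neighborSet_inter_subset y S)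

theorem ncard_neighborSet_inl_inter {x : V} {S : Set (V ⊕ W)} (h : x ≠ v ∨ inr w ∉ S) :
    ((G.sum H ⊔ edge (inl v) (inr w)).neighborSet (inl x) ∩ S).ncard =
      (G.neighborSet x ∩ inl ⁻¹' S).ncard := by
  rw [neighborSet_inl_inter_eq_image h, ncard_image_of_injective _ inl_injective]

theorem ncard_neighborSet_inr_inter {y : W} {S : Set (V ⊕ W)} (h : y ≠ w ∨ inl v ∉ S) :
    ((G.sum H ⊔ edge (inl v) (inr w)).neighborSet (inr y) ∩ S).ncard =
      (H.neighborSet y ∩ inr ⁻¹' S).ncard := by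
  rw [neighborSet_inr_inter_eq_image h, ncard_image_of_injective _ inr_injective]

theorem ncard_neighborSet_inl {x : V} (hxv : x ≠ v) :
    ((G.sum H ⊔ edge (inl v) (inr w)).neighborSet (inl x)).ncard = (G.neighborSet x).ncard := by
  simpa using ncard_neighborSet_inl_inter (H := H) (w := w) (S := univ) (Or.inl hxv)

theorem ncard_neighborSet_inr {y : W} (hyw : y ≠ w) :
    ((G.sum H ⊔ edge (inl v) (inr w)).neighborSet (inr y)).ncard = (H.neighborSet y).ncard := by
  simpa using ncard_neighborSet_inr_inter (G := G) (v := v) (S := univ) (Or.inl hyw)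

variable {k : ℕ}

theorem IsKDomOn.sum_sup_edge [Finite V] [Finite W] {D : Set V} {E : Set W}
    (hD : IsKDomOn G k univ D) (hE : IsKDomOn H k univ E) :
    IsKDomOn (G.sum H ⊔ edge (inl v) (inr w)) k univ (inl '' D ∪ inr '' E) := by
  refine ⟨subset_univ _, ?_⟩
  rintro (x | y) - hS
  · refine le_trans ?_ (ncard_neighborSet_inter_preimage_inl_le x _)
    simpa [preimage_image_eq _ inl_injective] using hD.2 x (mem_univ x) (by simpa using hS)
  · refine le_trans ?_ (ncard_neighborSet_inter_preimage_inr_le y _)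
    simpa [preimage_image_eq _ inr_injective] using hE.2 y (mem_univ y) (by simpa using hS)

theorem gammaK_sum_sup_edge_le [Finite V] [Finite W] :
    gammaK (G.sum H ⊔ edge (inl v) (inr w)) k univ ≤ gammaK G k univ + gammaK H k univ := by
  obtain ⟨D, hD, hDcard⟩ := exists_isKDomOn_ncard_eq_gammaK G k
  obtain ⟨E, hE, hEcard⟩ := exists_isKDomOn_ncard_eq_gammaK H k
  calc _ ≤ (inl '' D ∪ inr '' E : Set (V ⊕ W)).ncard := gammaK_le_ncard (hD.sum_sup_edge hE)
    _ = _ := by rw [ncard_image_inl_union_image_inr, hDcard, hEcard]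

theorem IsKIndOn.sum_sup_edge {D : Set V} {E : Set W} (hD : IsKIndOn G k univ D)
    (hE : IsKIndOn H k univ E) (hw : w ∉ E) :
    IsKIndOn (G.sum H ⊔ edge (inl v) (inr w)) k univ (inl '' D ∪ inr '' E) := by
  refine ⟨subset_univ _, ?_⟩
  rintro (x | y) hS
  · rw [ncard_neighborSet_inl_inter (Or.inr (by simpa using hw))]
    simpa [preimage_image_eq _ inl_injective] using hD.2 x (by simpa using hS)
  · have hy : y ∈ E := by simpa using hS
    rw [ncard_neighborSet_inr_inter (Or.inl (ne_of_mem_of_not_mem hy hw))]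
    simpa [preimage_image_eq _ inr_injective] using hE.2 y hy

theorem IsKIndOn.preimage_inl [Finite V] [Finite W] {S : Set (V ⊕ W)}
    (hS : IsKIndOn (G.sum H ⊔ edge (inl v) (inr w)) k univ S) :
    IsKIndOn G k univ (inl ⁻¹' S) :=
  ⟨subset_univ _, fun x hx =>
    (ncard_neighborSet_inter_preimage_inl_le (H := H) (w := w) x S).trans (hS.2 _ hx)⟩

theorem IsKIndOn.preimage_inr [Finite V] [Finite W] {S : Set (V ⊕ W)}
    (hS : IsKIndOn (G.sum H ⊔ edge (inl v) (inr w)) k univ S) :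
    IsKIndOn H k univ (inr ⁻¹' S) :=
  ⟨subset_univ _, fun y hy =>
    (ncard_neighborSet_inter_preimage_inr_le (G := G) (v := v) y S).trans (hS.2 _ hy)⟩

theorem alphaK_sum_sup_edge_le [Finite V] [Finite W] :
    alphaK (G.sum H ⊔ edge (inl v) (inr w)) k univ ≤ alphaK G k univ + alphaK H k univ := by
  obtain ⟨S, hS, hScard⟩ := exists_isKIndOn_ncard_eq_alphaK (G.sum H ⊔ edge (inl v) (inr w)) k
  rw [← hScard, ncard_eq_ncard_preimage_inl_add_ncard_preimage_inr]
  exact add_le_add (ncard_le_alphaK hS.preimage_inl) (ncard_le_alphaK hS.preimage_inr)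

theorem IsKDomOn.of_sum_sup_edge [Finite V] {S : Set (V ⊕ W)} {D : Set V}
    (hS : IsKDomOn (G.sum H ⊔ edge (inl v) (inr w)) k univ S) (hSD : inl ⁻¹' S ⊆ D)
    (hv : v ∈ D ∨ inr w ∉ S) : IsKDomOn G k univ D := by
  refine ⟨subset_univ _, fun x _ hxD => ?_⟩
  have hx : x ≠ v ∨ inr w ∉ S := hv.imp (fun hv h => hxD (h ▸ hv)) id
  calc k ≤ _ := hS.2 (inl x) (mem_univ _) fun h => hxD (hSD h)
    _ = (G.neighborSet x ∩ inl ⁻¹' S).ncard := ncard_neighborSet_inl_inter hx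
    _ ≤ _ := ncard_le_ncard (inter_subset_inter_right _ hSD)

end SumSupEdge

section PathGraphThree

theorem pathGraph_three_neighborSet_one : (pathGraph 3).neighborSet 1 = {0, 2} := by
  ext i; fin_cases i <;> simp [pathGraph_adj]

theorem pathGraph_three_neighborSet_two : (pathGraph 3).neighborSet 2 = {1} := by
  ext i; fin_cases i <;> simp [pathGraph_adj]

theorem isKDomOn_pathGraph_three : IsKDomOn (pathGraph 3) 2 univ {0, 2} := by
  refine ⟨subset_univ _, fun i _ hi => ?_⟩
  obtain rfl : i = 1 := by fin_cases i <;> simp_all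
  rw [pathGraph_three_neighborSet_one, inter_self, ncard_pair (by decide)]

theorem gammaK_pathGraph_three_le : gammaK (pathGraph 3) 2 univ ≤ 2 :=
  (gammaK_le_ncard isKDomOn_pathGraph_three).trans_eq (ncard_pair (by decide))

theorem isKIndOn_pathGraph_three : IsKIndOn (pathGraph 3) 2 univ {1, 2} := by
  refine ⟨subset_univ _, ?_⟩
  rintro i (rfl | rfl)
  · rw [pathGraph_three_neighborSet_one,
      show ({0, 2} : Set (Fin 3)) ∩ {1, 2} = {2} by ext i; fin_cases i <;> simp]
    simp
  · rw [pathGraph_three_neighborSet_two]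
    simp

theorem alphaK_pathGraph_three_le : alphaK (pathGraph 3) 2 univ ≤ 2 := by
  obtain ⟨E, hE, hEcard⟩ := exists_isKIndOn_ncard_eq_alphaK (pathGraph 3) 2
  by_contra! h
  have hE_univ : E = univ := eq_of_subset_of_ncard_le (subset_univ E) (by simp; omega)
  have := hE.2 1 (hE_univ ▸ mem_univ 1)
  rw [hE_univ, inter_univ, pathGraph_three_neighborSet_one] at this
  simp at this

end PathGraphThree

section PendantPath

variable {V : Type*} [Finite V] {G : SimpleGraph V} {a b v : V}

theorem gammaK_le_ncard_of_isKDomOn_insert {D : Set V} (hD : IsKDomOn G 2 univ (insert v D))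
    (hbD : b ∈ D ∨ v ∈ D) (hab : G.Adj a b) (hbv : G.Adj b v) (hav : a ≠ v)
    (hda : (G.neighborSet a).ncard = 1) (hdb : (G.neighborSet b).ncard = 2) :
    gammaK G 2 univ ≤ D.ncard := by
  by_cases hv : v ∈ D
  · simpa [insert_eq_of_mem hv] using gammaK_le_ncard hD
  have hb : b ∈ D := hbD.resolve_right hv
  have ha : a ∈ insert v D := hD.mem_of_ncard_neighborSet_lt (by omega)
  have hNb : G.neighborSet b = {a, v} :=
    (eq_of_subset_of_ncard_le (s := {a, v}) (t := G.neighborSet b) (pair_subset hab.symm hbv)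
      (by rw [hdb, ncard_pair hav])).symm
  -- Both neighbours of `b` are now in the set, so `b` itself is redundant.
  have hD' := hD.diff_singleton (hNb ▸ pair_subset ha (mem_insert v D)) hdb.ge
  calc gammaK G 2 univ ≤ (insert v D \ {b}).ncard := gammaK_le_ncard hD'
    _ = D.ncard := by
      rw [ncard_sdiff_singleton_of_mem (mem_insert_of_mem v hb), ncard_insert_of_notMem hv]
      rfl

theorem gammaK_add_two_le_gammaK_sum_pathGraph_three (hab : G.Adj a b) (hbv : G.Adj b v)
    (hav : a ≠ v) (hda : (G.neighborSet a).ncard = 1) (hdb : (G.neighborSet b).ncard = 2) :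
    gammaK G 2 univ + 2 ≤ gammaK (G.sum (pathGraph 3) ⊔ edge (inl v) (inr 0)) 2 univ := by
  obtain ⟨S, hS, hScard⟩ :=
    exists_isKDomOn_ncard_eq_gammaK (G.sum (pathGraph 3) ⊔ edge (inl v) (inr 0)) 2
  rw [← hScard, ncard_eq_ncard_preimage_inl_add_ncard_preimage_inr]
  have h2 : inr 2 ∈ S := hS.mem_of_ncard_neighborSet_lt (by
    rw [ncard_neighborSet_inr (by decide), pathGraph_three_neighborSet_two, ncard_singleton]
    norm_num)
  by_cases h0 : inr 0 ∈ S
  · have hD := hS.of_sum_sup_edge (subset_insert v _) (Or.inl (mem_insert v _))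
    by_cases h1 : inr 1 ∈ S
    · have h3 : (inr ⁻¹' S : Set (Fin 3)).ncard = 3 := by
        rw [show inr ⁻¹' S = univ by ext i; fin_cases i <;> simpa]
        simp
      have := (gammaK_le_ncard hD).trans (ncard_insert_le v _)
      omega
    · have h02 : 2 ≤ (inr ⁻¹' S : Set (Fin 3)).ncard :=
        (ncard_pair (by decide)).symm.trans_le (ncard_le_ncard (pair_subset h0 h2))
      have hbS : b ∈ inl ⁻¹' S ∨ v ∈ inl ⁻¹' S := or_iff_not_imp_left.2 fun hb =>
        hS.neighborSet_subset hb (by rw [ncard_neighborSet_inl hbv.ne, hdb])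
          (by simpa [edge_adj] using hbv)
      have := gammaK_le_ncard_of_isKDomOn_insert hD hbS hab hbv hav hda hdb
      omega
  · have h1 : inr 1 ∈ S := by
      by_contra h1
      refine h0 (hS.neighborSet_subset h1 ?_ (by simp [edge_adj, pathGraph_adj]))
      rw [ncard_neighborSet_inr (by decide), pathGraph_three_neighborSet_one,
        ncard_pair (by decide)]
    have h12 : 2 ≤ (inr ⁻¹' S : Set (Fin 3)).ncard :=
      (ncard_pair (by decide)).symm.trans_le (ncard_le_ncard (pair_subset h1 h2))
    have := gammaK_le_ncard (hS.of_sum_sup_edge subset_rfl (Or.inr h0))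
    omega

theorem alphaK_add_two_le_alphaK_sum_pathGraph_three :
    alphaK G 2 univ + 2 ≤ alphaK (G.sum (pathGraph 3) ⊔ edge (inl v) (inr 0)) 2 univ := by
  obtain ⟨D, hD, hDcard⟩ := exists_isKIndOn_ncard_eq_alphaK G 2
  have hI := hD.sum_sup_edge (v := v) (w := 0) isKIndOn_pathGraph_three (by simp)
  calc alphaK G 2 univ + 2 = (inl '' D ∪ inr '' {1, 2} : Set (V ⊕ Fin 3)).ncard := by
        rw [ncard_image_inl_union_image_inr, ncard_pair (by decide), hDcard]
    _ ≤ _ := ncard_le_alphaK hI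

end PendantPath

theorem stmt12_general {V : Type*} [Fintype V] (T' : SimpleGraph V)
    (a b v : V) (hdist : ([a, b, v] : List V).Pairwise (· ≠ ·))
    (hab : T'.Adj a b) (hbv : T'.Adj b v)
    (hda : (T'.neighborSet a).ncard = 1) (hdb : (T'.neighborSet b).ncard = 2)
    (T : SimpleGraph (V ⊕ Fin 3))
    (hadj : ∀ a b, T.Adj a b ↔
      ((∃ x y, T'.Adj x y ∧ a = Sum.inl x ∧ b = Sum.inl y) ∨
       (a = (Sum.inr 0 : V ⊕ Fin 3) ∧ b = Sum.inr 1) ∨ (a = Sum.inr 1 ∧ b = (Sum.inr 0 : V ⊕ Fin 3)) ∨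
       (a = (Sum.inr 1 : V ⊕ Fin 3) ∧ b = Sum.inr 2) ∨ (a = Sum.inr 2 ∧ b = (Sum.inr 1 : V ⊕ Fin 3)) ∨
       (a = Sum.inl v ∧ b = (Sum.inr 0 : V ⊕ Fin 3)) ∨ (a = (Sum.inr 0 : V ⊕ Fin 3) ∧ b = Sum.inl v))) :
    gammaK T 2 Set.univ = gammaK T' 2 Set.univ + 2 ∧
    alphaK T 2 Set.univ = alphaK T' 2 Set.univ + 2 ∧
    (alphaK T 2 Set.univ : ℤ) - (gammaK T 2 Set.univ : ℤ) =
      (alphaK T' 2 Set.univ : ℤ) - (gammaK T' 2 Set.univ : ℤ) := by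
  have hav : a ≠ v := by simpa using (List.pairwise_cons.1 hdist).1 v (by simp)
  obtain rfl : T = T'.sum (pathGraph 3) ⊔ edge (inl v) (inr 0) := by
    ext x y
    rw [hadj]
    rcases x with x | i <;> rcases y with y | j
    · simp [edge_adj]
    · fin_cases j <;> simp [edge_adj]
    · fin_cases i <;> simp [edge_adj, eq_comm]
    · fin_cases i <;> fin_cases j <;> simp [edge_adj, pathGraph_adj]
  have hγ : gammaK (T'.sum (pathGraph 3) ⊔ edge (inl v) (inr 0)) 2 univ = gammaK T' 2 univ + 2 :=
    le_antisymm (gammaK_sum_sup_edge_le.trans (Nat.add_le_add_left gammaK_pathGraph_three_le _))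
      (gammaK_add_two_le_gammaK_sum_pathGraph_three hab hbv hav hda hdb)
  have hα : alphaK (T'.sum (pathGraph 3) ⊔ edge (inl v) (inr 0)) 2 univ = alphaK T' 2 univ + 2 :=
    le_antisymm (alphaK_sum_sup_edge_le.trans (Nat.add_le_add_left alphaK_pathGraph_three_le _))
      alphaK_add_two_le_alphaK_sum_pathGraph_three
  exact ⟨hγ, hα, by omega⟩

theorem stmt12 {V : Type*} [Fintype V] (T' : SimpleGraph V) (hT' : T'.IsTree)
    (a b v : V) (hdist : ([a, b, v] : List V).Pairwise (· ≠ ·))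
    (hab : T'.Adj a b) (hbv : T'.Adj b v)
    (hda : (T'.neighborSet a).ncard = 1) (hdb : (T'.neighborSet b).ncard = 2)
    (T : SimpleGraph (V ⊕ Fin 3))
    (hadj : ∀ a b, T.Adj a b ↔
      ((∃ x y, T'.Adj x y ∧ a = Sum.inl x ∧ b = Sum.inl y) ∨
       (a = (Sum.inr 0 : V ⊕ Fin 3) ∧ b = Sum.inr 1) ∨ (a = Sum.inr 1 ∧ b = (Sum.inr 0 : V ⊕ Fin 3)) ∨
       (a = (Sum.inr 1 : V ⊕ Fin 3) ∧ b = Sum.inr 2) ∨ (a = Sum.inr 2 ∧ b = (Sum.inr 1 : V ⊕ Fin 3)) ∨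
       (a = Sum.inl v ∧ b = (Sum.inr 0 : V ⊕ Fin 3)) ∨ (a = (Sum.inr 0 : V ⊕ Fin 3) ∧ b = Sum.inl v))) :
    gammaK T 2 Set.univ = gammaK T' 2 Set.univ + 2 ∧
    alphaK T 2 Set.univ = alphaK T' 2 Set.univ + 2 ∧
    (alphaK T 2 Set.univ : ℤ) - (gammaK T 2 Set.univ : ℤ) =
      (alphaK T' 2 Set.univ : ℤ) - (gammaK T' 2 Set.univ : ℤ) :=
  stmt12_general T' a b v hdist hab hbv hda hdb T hadj
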